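/- Let $N_p \subseteq \mathbb{C}^{d_p}$ and $N_q \subseteq \mathbb{C}^{d_q}$ be subspaces of dimensions $e_p$ and $e_q$ with Plücker coordinates $(\Delta_{I'})$ and $(\Delta_{J'})$, and let $A = (m_{j,i})$ be a $d_q \times d_p$ complex matrix. If for every $(e_p-1)$-subset $I$ of $\{1,\dots,d_p\}$ and every $(e_q+1)$-subset $J$ of $\{1,\dots,d_q\}$ the relation $\sum_{i \notin I,\, j \in J} (-1)^{\epsilon(i,I)+\epsilon(j,J)} m_{j,i} \Delta_{I\cup\{i\}} \Delta_{J\setminus\{j\}} = 0$ holds, then $A(N_p) \subseteq N_q$. -/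

import Mathlib

open Matrix Finset

def eps {d : ℕ} (i : Fin d) (I : Finset (Fin d)) : ℕ := (I.filter fun i' => i' ≤ i).card

noncomputable def plucker {d e : ℕ} (B : Matrix (Fin d) (Fin e) ℂ) (I : Finset (Fin d)) : ℂ :=
  if h : I.card = e then (B.submatrix (fun k => (I.orderIsoOfFin h k : Fin d)) id).det else 0

/-- The columns of `B` form a basis of the subspace `N` of `ℂ^d`. -/
def IsColBasis {d e : ℕ} (B : Matrix (Fin d) (Fin e) ℂ) (N : Submodule ℂ (Fin d → ℂ)) : Prop :=
  LinearIndependent ℂ (fun l => fun i => B i l) ∧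
    Submodule.span ℂ (Set.range fun l => fun i => B i l) = N

noncomputable def qpr {dp dq ep eq : ℕ} (A : Matrix (Fin dq) (Fin dp) ℂ)
    (Bp : Matrix (Fin dp) (Fin ep) ℂ) (Bq : Matrix (Fin dq) (Fin eq) ℂ)
    (I : Finset (Fin dp)) (J : Finset (Fin dq)) : ℂ :=
  ∑ i ∈ Iᶜ, ∑ j ∈ J,
    (-1 : ℂ) ^ (eps i I + eps j J) * A j i * plucker Bp (insert i I) * plucker Bq (J.erase j)

/-!
If `B` has linearly independent columns and `x` is not in their span, then `[B | x]` still has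
independent columns, hence a nonzero maximal minor; its Laplace expansion along the last column is,
up to sign, `∑_{j ∈ J} (-1)^ε(j,J) x_j Δ_{J∖j}`. So these sums vanishing for all `(e+1)`-subsets `J`
forces `x ∈ span B`.

For `|I| = e - 1`, Laplace expansion along row `i` shows that `v_I = ((-1)^ε(i,I) Δ_{I∪{i}})_i` is
`B` applied to a cofactor vector, so `v_I ∈ N`. If `Δ_R ≠ 0`, the vectors `v_{R∖{r}}` are, up to
sign, the columns of `B · adj(B_R)`, and `adj(B_R)` is invertible, so they span `N`. The hypothesis
on `A` says exactly that each `A v_I` satisfies the relations above for `N_q`.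
-/

section Cofactor

variable {R : Type*} [CommRing R] {ι : Type*} {m : ℕ}

def cofactorVec (B : Matrix ι (Fin (m + 1)) R) (g : Fin m → ι) : Fin (m + 1) → R :=
  fun l => (-1) ^ (l : ℕ) * (B.submatrix g l.succAbove).det

theorem det_submatrix_insertNth (B : Matrix ι (Fin (m + 1)) R) (p : Fin (m + 1)) (i : ι)
    (g : Fin m → ι) :
    (B.submatrix (p.insertNth i g) id).det = (-1) ^ (p : ℕ) * (B *ᵥ cofactorVec B g) i := by
  rw [det_succ_row _ p, mulVec, dotProduct, mul_sum]
  refine sum_congr rfl fun l _ => ?_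
  have hrows : p.insertNth i g ∘ p.succAbove = g :=
    funext (Fin.insertNth_apply_succAbove (α := fun _ => ι) p i g)
  simp only [submatrix_apply, Fin.insertNth_apply_same, id, submatrix_submatrix, hrows,
    Function.id_comp, cofactorVec, pow_add]
  ring

theorem det_of_snoc (B : Matrix (Fin (m + 1)) (Fin m) R) (x : Fin (m + 1) → R) :
    (of fun i => (Fin.snoc (B i) (x i) : Fin (m + 1) → R)).det =
      ∑ k : Fin (m + 1), (-1) ^ (k + m : ℕ) * x k * (B.submatrix k.succAbove id).det := by
  rw [det_succ_column _ (Fin.last m)]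
  refine sum_congr rfl fun k _ => ?_
  have hminor : (of fun i => (Fin.snoc (B i) (x i) : Fin (m + 1) → R)).submatrix k.succAbove
      (Fin.last m).succAbove = B.submatrix k.succAbove id := by
    ext a b
    simp [Fin.succAbove_last]
  rw [hminor, of_apply, Fin.snoc_last, Fin.val_last]

end Cofactor

section SortedSubsets

variable {α : Type*} [LinearOrder α] {m : ℕ}

theorem Finset.sum_orderEmbOfFin {M : Type*} [AddCommMonoid M] (J : Finset α) (hJ : J.card = m)
    (F : α → M) : ∑ j ∈ J, F j = ∑ k, F (J.orderEmbOfFin hJ k) := by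
  rw [← sum_coe_sort J, ← (J.orderIsoOfFin hJ).toEquiv.sum_comp]
  simp

theorem Finset.exists_orderEmbOfFin_eq {J : Finset α} (hJ : J.card = m) {j : α} (hj : j ∈ J) :
    ∃ k, J.orderEmbOfFin hJ k = j := by
  rw [← Set.mem_range, range_orderEmbOfFin]
  exact hj

theorem Finset.card_erase_orderEmbOfFin (J : Finset α) (hJ : J.card = m + 1) (k : Fin (m + 1)) :
    (J.erase (J.orderEmbOfFin hJ k)).card = m := by
  rw [card_erase_of_mem (J.orderEmbOfFin_mem hJ k), hJ, Nat.add_sub_cancel]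

theorem Finset.orderEmbOfFin_erase (J : Finset α) (hJ : J.card = m + 1) (k : Fin (m + 1)) :
    ⇑((J.erase (J.orderEmbOfFin hJ k)).orderEmbOfFin (J.card_erase_orderEmbOfFin hJ k)) =
      J.orderEmbOfFin hJ ∘ k.succAbove := by
  refine (orderEmbOfFin_unique _ (fun x => mem_erase.2 ⟨?_, orderEmbOfFin_mem _ _ _⟩)
    ((J.orderEmbOfFin hJ).strictMono.comp k.strictMono_succAbove)).symm
  exact fun h => k.succAbove_ne x ((J.orderEmbOfFin hJ).injective h)

end SortedSubsets

section Plucker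

variable {d e m : ℕ}

theorem eps_orderEmbOfFin (J : Finset (Fin d)) (hJ : J.card = m) (k : Fin m) :
    eps (J.orderEmbOfFin hJ k) J = k + 1 := by
  rw [eps, card_filter, J.sum_orderEmbOfFin hJ]
  simp only [OrderEmbedding.le_iff_le, ← card_filter]
  rw [← Fin.card_Iic]
  congr 1
  ext
  simp

theorem eps_insert {i : Fin d} {I : Finset (Fin d)} (hi : i ∉ I) :
    eps i (insert i I) = eps i I + 1 := by
  rw [eps, filter_insert, if_pos le_rfl, card_insert_of_notMem (fun h => hi (mem_filter.1 h).1),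
    eps]

theorem plucker_eq_det (B : Matrix (Fin d) (Fin e) ℂ) {I : Finset (Fin d)} (h : I.card = e) :
    plucker B I = (B.submatrix (I.orderEmbOfFin h) id).det := by
  rw [plucker, dif_pos h]
  rfl

theorem plucker_of_card_ne (B : Matrix (Fin d) (Fin e) ℂ) {I : Finset (Fin d)}
    (h : I.card ≠ e) : plucker B I = 0 := by
  rw [plucker, dif_neg h]

noncomputable def pluckerVec (B : Matrix (Fin d) (Fin e) ℂ) (I : Finset (Fin d)) : Fin d → ℂ :=
  fun i => (-1) ^ eps i I * plucker B (insert i I)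

theorem pluckerVec_apply_of_mem (B : Matrix (Fin d) (Fin e) ℂ) {I : Finset (Fin d)}
    (hI : I.card ≠ e) {i : Fin d} (hi : i ∈ I) : pluckerVec B I i = 0 := by
  rw [pluckerVec, insert_eq_self.2 hi, plucker_of_card_ne B hI, mul_zero]

theorem pluckerVec_eq_mulVec (B : Matrix (Fin d) (Fin (m + 1)) ℂ) {I : Finset (Fin d)}
    (hI : I.card = m) : pluckerVec B I = B *ᵥ cofactorVec B (I.orderEmbOfFin hI) := by
  funext i
  set g := I.orderEmbOfFin hI
  by_cases hi : i ∈ I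
  · obtain ⟨a, rfl⟩ := I.exists_orderEmbOfFin_eq hI hi
    have hrepeat : (B.submatrix ((Fin.last m).insertNth (g a) g) id).det = 0 := by
      refine det_zero_of_row_eq (i := a.castSucc) (j := Fin.last m) (Fin.castSucc_lt_last a).ne ?_
      funext b
      simp [Fin.insertNth_last']
    rw [det_submatrix_insertNth] at hrepeat
    rw [pluckerVec_apply_of_mem B (by omega) hi,
      (mul_eq_zero.1 hrepeat).resolve_left (pow_ne_zero _ (by norm_num))]
  · have hcard : (insert i I).card = m + 1 := by rw [card_insert_of_notMem hi, hI]
    set f := (insert i I).orderEmbOfFin hcard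
    obtain ⟨p, hp⟩ := (insert i I).exists_orderEmbOfFin_eq hcard (mem_insert_self i I)
    have hrest : f ∘ p.succAbove = g := by
      refine orderEmbOfFin_unique hI (fun x => ?_) (f.strictMono.comp p.strictMono_succAbove)
      refine (mem_insert.1 (orderEmbOfFin_mem _ hcard _)).resolve_left fun h => ?_
      exact p.succAbove_ne x (f.injective (h.trans hp.symm))
    have hf : ⇑f = p.insertNth i g := by
      rw [← hp, ← hrest]
      exact (Fin.insertNth_self_removeNth p f).symm
    have heps : eps i I = p := by
      have := eps_orderEmbOfFin (insert i I) hcard p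
      rw [hp, eps_insert hi] at this
      omega
    rw [pluckerVec, plucker_eq_det B hcard, hf, det_submatrix_insertNth, heps, ← mul_assoc,
      ← pow_add, ← two_mul, pow_mul, neg_one_sq, one_pow, one_mul]

theorem plucker_of_snoc (B : Matrix (Fin d) (Fin e) ℂ) (x : Fin d → ℂ) {J : Finset (Fin d)}
    (hJ : J.card = e + 1) :
    plucker (of fun i => (Fin.snoc (B i) (x i) : Fin (e + 1) → ℂ)) J =
      (-1) ^ (e + 1) * ∑ j ∈ J, (-1) ^ eps j J * x j * plucker B (J.erase j) := by
  set f := J.orderEmbOfFin hJ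
  rw [plucker_eq_det _ hJ, J.sum_orderEmbOfFin hJ, mul_sum]
  refine (det_of_snoc (B.submatrix f id) (x ∘ f)).trans (sum_congr rfl fun k _ => ?_)
  rw [eps_orderEmbOfFin, plucker_eq_det B (J.card_erase_orderEmbOfFin hJ k),
    J.orderEmbOfFin_erase hJ k, submatrix_submatrix, Function.id_comp, Function.comp_apply,
    pow_add, pow_add, pow_add]
  ring

end Plucker

section Span

variable {d e : ℕ}

theorem exists_plucker_ne_zero (B : Matrix (Fin d) (Fin e) ℂ) (hB : LinearIndependent ℂ B.col) :
    ∃ J : Finset (Fin d), J.card = e ∧ plucker B J ≠ 0 := by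
  obtain ⟨s, -, -, hspan, hs⟩ := exists_linearIndepOn_extension (v := B.row)
    (linearIndepOn_empty ℂ B.row) (Set.empty_subset Set.univ)
  set J := s.toFinite.toFinset
  rw [← s.toFinite.coe_toFinset] at hspan hs
  have hspanJ : Submodule.span ℂ (B.row '' J) = Submodule.span ℂ (Set.range B.row) :=
    le_antisymm (Submodule.span_mono (Set.image_subset_range _ _))
      (Submodule.span_le.2 (Set.image_univ ▸ hspan))
  have hJ : J.card = e := by
    have := finrank_span_eq_card hs
    rw [← Set.image_eq_range, hspanJ, ← rank_eq_finrank_span_row, rank_eq_finrank_span_cols,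
      finrank_span_eq_card hB, Fintype.card_fin] at this
    simpa using this.symm
  refine ⟨J, hJ, ?_⟩
  rw [plucker, dif_pos hJ]
  exact ((isUnit_iff_isUnit_det _).1
    (linearIndependent_rows_iff_isUnit.1 (hs.comp _ (J.orderIsoOfFin hJ).injective))).ne_zero

theorem mem_span_col_of_plucker_relations {B : Matrix (Fin d) (Fin e) ℂ}
    (hB : LinearIndependent ℂ B.col) {x : Fin d → ℂ}
    (hx : ∀ J : Finset (Fin d), J.card = e + 1 →
      ∑ j ∈ J, (-1) ^ eps j J * x j * plucker B (J.erase j) = 0) :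
    x ∈ Submodule.span ℂ (Set.range B.col) := by
  by_contra hx_notMem
  set C : Matrix (Fin d) (Fin (e + 1)) ℂ := of fun i => Fin.snoc (B i) (x i)
  have hC : C.col = Fin.snoc B.col x := by
    funext l i
    induction l using Fin.lastCases <;> simp [C]
  obtain ⟨J, hJ, hne⟩ := exists_plucker_ne_zero C (hC ▸ linearIndependent_finSnoc.2 ⟨hB, hx_notMem⟩)
  exact hne (by rw [plucker_of_snoc B x hJ, hx J hJ, mul_zero])

theorem span_col_le_span_pluckerVec {B : Matrix (Fin d) (Fin e) ℂ}
    (hB : LinearIndependent ℂ B.col) :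
    Submodule.span ℂ (Set.range B.col) ≤
      Submodule.span ℂ {v | ∃ I : Finset (Fin d), I.card + 1 = e ∧ pluckerVec B I = v} := by
  cases e with
  | zero => simp [Set.range_eq_empty]
  | succ m =>
    obtain ⟨R, hR, hne⟩ := exists_plucker_ne_zero B hB
    set f := R.orderEmbOfFin hR
    set M := B.submatrix f id
    have hM : IsUnit M.det := (plucker_eq_det B hR ▸ hne).isUnit
    have hadj : IsUnit (adjugate M) := (isUnit_iff_isUnit_det _).2 (det_adjugate M ▸ hM.pow _)
    have hcol : ∀ k,
        (B * adjugate M).col k = (-1 : ℂ) ^ (k : ℕ) • pluckerVec B (R.erase (f k)) := by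
      intro k
      funext i
      rw [pluckerVec_eq_mulVec B (R.card_erase_orderEmbOfFin hR k), R.orderEmbOfFin_erase hR k]
      simp only [col_apply, mul_apply, mulVec, dotProduct, Pi.smul_apply, smul_eq_mul, mul_sum,
        cofactorVec, adjugate_fin_succ_eq_det_submatrix, M, submatrix_submatrix]
      refine sum_congr rfl fun l _ => ?_
      rw [Function.id_comp, pow_add]
      ring
    have hrange : Submodule.span ℂ (Set.range B.col) =
        Submodule.span ℂ (Set.range (B * adjugate M).col) := by
      rw [← range_mulVecLin, ← range_mulVecLin, mulVecLin_mul, LinearMap.range_comp_of_range_eq_top]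
      exact LinearMap.range_eq_top.2 (mulVec_surjective_iff_isUnit.2 hadj)
    rw [hrange, Submodule.span_le]
    rintro _ ⟨k, rfl⟩
    rw [hcol]
    exact Submodule.smul_mem _ _
      (Submodule.subset_span ⟨_, by rw [R.card_erase_orderEmbOfFin hR k], rfl⟩)

end Span

theorem qpr_eq_sum_mulVec_pluckerVec {dp dq ep eq : ℕ} (A : Matrix (Fin dq) (Fin dp) ℂ)
    (Bp : Matrix (Fin dp) (Fin ep) ℂ) (Bq : Matrix (Fin dq) (Fin eq) ℂ) {I : Finset (Fin dp)}
    (hI : I.card + 1 = ep) (J : Finset (Fin dq)) :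
    qpr A Bp Bq I J =
      ∑ j ∈ J, (-1) ^ eps j J * (A *ᵥ pluckerVec Bp I) j * plucker Bq (J.erase j) := by
  rw [qpr, sum_comm]
  refine sum_congr rfl fun j _ => ?_
  have hvanish : ∑ i ∈ I, A j i * pluckerVec Bp I i = 0 :=
    sum_eq_zero fun i hi => by rw [pluckerVec_apply_of_mem Bp (by omega) hi, mul_zero]
  rw [mulVec, dotProduct, ← sum_compl_add_sum I, hvanish, add_zero, mul_sum, sum_mul]
  refine sum_congr rfl fun i _ => ?_
  rw [pluckerVec, pow_add]
  ring

theorem stmt2 {dp dq ep eq : ℕ}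
    (Np : Submodule ℂ (Fin dp → ℂ)) (Nq : Submodule ℂ (Fin dq → ℂ))
    (Bp : Matrix (Fin dp) (Fin ep) ℂ) (Bq : Matrix (Fin dq) (Fin eq) ℂ)
    (hBp : IsColBasis Bp Np) (hBq : IsColBasis Bq Nq)
    (A : Matrix (Fin dq) (Fin dp) ℂ)
    (hqpr : ∀ I : Finset (Fin dp), I.card + 1 = ep →
      ∀ J : Finset (Fin dq), J.card = eq + 1 → qpr A Bp Bq I J = 0) :
    ∀ x ∈ Np, A.mulVec x ∈ Nq := by
  obtain ⟨hBp, rfl⟩ := hBp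
  obtain ⟨hBq, rfl⟩ := hBq
  have hgen : ∀ I : Finset (Fin dp), I.card + 1 = ep →
      A *ᵥ pluckerVec Bp I ∈ Submodule.span ℂ (Set.range Bq.col) := fun I hI =>
    mem_span_col_of_plucker_relations hBq fun J hJ =>
      (qpr_eq_sum_mulVec_pluckerVec A Bp Bq hI J).symm.trans (hqpr I hI J hJ)
  have hspan : Submodule.span ℂ (Set.range Bp.col) ≤
      (Submodule.span ℂ (Set.range Bq.col)).comap A.mulVecLin :=
    (span_col_le_span_pluckerVec hBp).trans <| Submodule.span_le.2 <| by
      rintro _ ⟨I, hI, rfl⟩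
      exact hgen I hI
  exact fun x hx => hspan hx
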